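/- arXiv:1805.07495 — 3 statements merged into one kernel-verified Lean document; each statement's English description precedes it below -/
import Mathlib

section
/- (Lemma: sparsity pattern via strict dual feasibility.) Let L : ℝ^p → ℝ be convex and differentiable, λ > 0, and N ⊆ {1,…,p}. Consider F(θ) := L(θ) + λ Σ_{j∉N} |θ_j|. Suppose θ̂ is a global minimizer of F and ẑ ∈ ℝ^p satisfies: ∇L(θ̂) + λ ẑ = 0; ẑ_j = 0 for all j ∈ N; |ẑ_j| ≤ 1 and ẑ_j θ̂_j = |θ̂_j| for all j ∉ N. Then every global minimizer θ̃ of F satisfies θ̃_j = 0 for every index j ∉ N with |ẑ_j| < 1. -/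
open Finset
open scoped RealInnerProductSpace

/-! The dual certificate `ẑ` makes `θ ↦ ⟪ẑ, θ⟫` a minorant of the penalty `∑_{j ∉ N} |θ j|` which
touches it at `θ̂`, so by convexity of `L` every `θ` satisfies
`F θ ≥ F θ̂ + λ (∑_{j ∉ N} |θ j| - ⟪ẑ, θ⟫)`. For another minimizer the gap in brackets must vanish,
which is impossible if some coordinate with `|ẑ_j| < 1` is nonzero. -/

section FirstOrder

variable {E : Type*} [NormedAddCommGroup E] {s : Set E} {f : E → ℝ} {x y : E}

theorem ConvexOn.add_fderiv_sub_le [NormedSpace ℝ E] {f' : E →L[ℝ] ℝ} (hf : ConvexOn ℝ s f)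
    (hx : x ∈ s) (hy : y ∈ s) (hf' : HasFDerivAt f f' x) : f x + f' (y - x) ≤ f y := by
  set ℓ : ℝ →ᵃ[ℝ] E := AffineMap.lineMap x y
  have hℓ0 : ℓ 0 = x := AffineMap.lineMap_apply_zero x y
  have hℓ1 : ℓ 1 = y := AffineMap.lineMap_apply_one x y
  have hconv : ConvexOn ℝ (ℓ ⁻¹' s) (f ∘ ℓ) := hf.comp_affineMap ℓ
  have hderiv : HasDerivAt (f ∘ ℓ) (f' (y - x)) 0 :=
    hf'.comp_hasDerivAt_of_eq 0 AffineMap.hasDerivAt_lineMap hℓ0.symm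
  have hslope := hconv.le_slope_of_hasDerivAt (x := 0) (y := 1) (by rwa [Set.mem_preimage, hℓ0])
    (by rwa [Set.mem_preimage, hℓ1]) one_pos hderiv
  simp only [slope_def_field, Function.comp, hℓ0, hℓ1, sub_zero, div_one] at hslope
  linarith

theorem ConvexOn.add_inner_gradient_sub_le [InnerProductSpace ℝ E] [CompleteSpace E] {g : E}
    (hf : ConvexOn ℝ s f) (hx : x ∈ s) (hy : y ∈ s) (hg : HasGradientAt f g x) :
    f x + ⟪g, y - x⟫ ≤ f y := by
  simpa using hf.add_fderiv_sub_le hx hy hg.hasFDerivAt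

end FirstOrder

theorem mul_le_abs_of_abs_le_one {a b : ℝ} (ha : |a| ≤ 1) : a * b ≤ |b| :=
  calc a * b ≤ |a| * |b| := (le_abs_self _).trans (abs_mul a b).le
    _ ≤ |b| := mul_le_of_le_one_left (abs_nonneg b) ha

theorem mul_lt_abs_of_abs_lt_one {a b : ℝ} (ha : |a| < 1) (hb : b ≠ 0) : a * b < |b| :=
  calc a * b ≤ |a| * |b| := (le_abs_self _).trans (abs_mul a b).le
    _ < |b| := mul_lt_of_lt_one_left (abs_pos.mpr hb) ha

namespace EuclideanSpace

variable {ι : Type*} [Fintype ι] [DecidableEq ι] {N : Finset ι} {z : EuclideanSpace ℝ ι}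

theorem inner_eq_sum_compl_of_eq_zero (hz : ∀ j ∈ N, z j = 0) (θ : EuclideanSpace ℝ ι) :
    ⟪z, θ⟫ = ∑ j ∈ Nᶜ, z j * θ j := by
  rw [PiLp.inner_apply, ← sum_add_sum_compl N, sum_eq_zero (fun j hj => by simp [hz j hj]),
    zero_add]
  exact sum_congr rfl fun j _ => by simp [mul_comm]

theorem inner_lt_sum_compl_abs (hz : ∀ j ∈ N, z j = 0) (hz_le : ∀ j ∉ N, |z j| ≤ 1)
    {θ : EuclideanSpace ℝ ι} {j : ι} (hj : j ∉ N) (hzj : |z j| < 1) (hθj : θ j ≠ 0) :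
    ⟪z, θ⟫ < ∑ i ∈ Nᶜ, |θ i| := by
  rw [inner_eq_sum_compl_of_eq_zero hz]
  exact sum_lt_sum (fun i hi => mul_le_abs_of_abs_le_one (hz_le i (mem_compl.mp hi)))
    ⟨j, mem_compl.mpr hj, mul_lt_abs_of_abs_lt_one hzj hθj⟩

end EuclideanSpace

theorem sparsity_pattern_of_strict_dual_feasibility_general
    (p : ℕ) (L : EuclideanSpace ℝ (Fin p) → ℝ)
    (hLconv : ConvexOn ℝ Set.univ L) (hLdiff : Differentiable ℝ L)
    (lam : ℝ) (hlam : 0 < lam) (N : Finset (Fin p))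
    (F : EuclideanSpace ℝ (Fin p) → ℝ)
    (hF : F = fun θ => L θ + lam * ∑ j ∈ Nᶜ, |θ j|)
    (θhat zhat : EuclideanSpace ℝ (Fin p))
    (hstat : gradient L θhat + lam • zhat = 0)
    (hzN : ∀ j ∈ N, zhat j = 0)
    (hzfeas : ∀ j ∉ N, |zhat j| ≤ 1 ∧ zhat j * θhat j = |θhat j|) :
    ∀ θtilde : EuclideanSpace ℝ (Fin p), (∀ θ, F θtilde ≤ F θ) →
      ∀ j ∉ N, |zhat j| < 1 → θtilde j = 0 := by
  intro θt hθt j hj hzj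
  by_contra hθtj
  have hF_le : L θt + lam * ∑ i ∈ Nᶜ, |θt i| ≤ L θhat + lam * ∑ i ∈ Nᶜ, |θhat i| := by
    simpa [hF] using hθt θhat
  have hsupport :=
    hLconv.add_inner_gradient_sub_le (y := θt) trivial trivial (hLdiff θhat).hasGradientAt
  have hhat : ⟪zhat, θhat⟫ = ∑ i ∈ Nᶜ, |θhat i| :=
    (EuclideanSpace.inner_eq_sum_compl_of_eq_zero hzN θhat).trans
      (sum_congr rfl fun i hi => (hzfeas i (mem_compl.mp hi)).2)
  rw [eq_neg_of_add_eq_zero_left hstat, inner_neg_left, real_inner_smul_left,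
    inner_sub_right, mul_sub, hhat] at hsupport
  have htilde : ⟪zhat, θt⟫ < ∑ i ∈ Nᶜ, |θt i| :=
    EuclideanSpace.inner_lt_sum_compl_abs hzN (fun i hi => (hzfeas i hi).1) hj hzj hθtj
  linarith [mul_lt_mul_of_pos_left htilde hlam]

/-- Sparsity pattern via strict dual feasibility. If `θ̂` is a global minimizer
of `F(θ) = L(θ) + λ ∑_{j ∉ N} |θ j|` with dual certificate `ẑ` satisfying
`∇L(θ̂) + λ ẑ = 0`, `ẑ_j = 0` on `N`, `|ẑ_j| ≤ 1` and `ẑ_j θ̂_j = |θ̂_j|` off `N`,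
then every global minimizer `θ̃` of `F` vanishes at every `j ∉ N` with `|ẑ_j| < 1`. -/
theorem sparsity_pattern_of_strict_dual_feasibility
    (p : ℕ) (L : EuclideanSpace ℝ (Fin p) → ℝ)
    (hLconv : ConvexOn ℝ Set.univ L) (hLdiff : Differentiable ℝ L)
    (lam : ℝ) (hlam : 0 < lam) (N : Finset (Fin p))
    (F : EuclideanSpace ℝ (Fin p) → ℝ)
    (hF : F = fun θ => L θ + lam * ∑ j ∈ Nᶜ, |θ j|)
    (θhat zhat : EuclideanSpace ℝ (Fin p))
    (hmin : ∀ θ, F θhat ≤ F θ)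
    (hstat : gradient L θhat + lam • zhat = 0)
    (hzN : ∀ j ∈ N, zhat j = 0)
    (hzfeas : ∀ j ∉ N, |zhat j| ≤ 1 ∧ zhat j * θhat j = |θhat j|) :
    ∀ θtilde : EuclideanSpace ℝ (Fin p), (∀ θ, F θtilde ≤ F θ) →
      ∀ j ∉ N, |zhat j| < 1 → θtilde j = 0 :=
  sparsity_pattern_of_strict_dual_feasibility_general p L hLconv hLdiff lam hlam N F hF θhat zhat
    hstat hzN hzfeas
end

section
/- (Theorem 2, ℓ2 error bound, case h ≥ k.) Let p, n ≥ 1, an integer h ≥ 0, constants κ > 0, τ₁ ≥ 0, λ > 0, ρ > 0. Let Δ ∈ ℝ^p, let H ⊆ {1,…,p} with |H| = h, and let g₀, g₁ ∈ ℝ^p. Assume: (i) κ‖Δ‖₂² − τ₁ (log p / n)‖Δ‖₁² ≤ ⟨g₁ − g₀, Δ⟩; (ii) ⟨g₁, Δ⟩ ≤ −λ‖Δ_{H^c}‖₁; (iii) ‖g₀‖∞ ≤ λ/4; (iv) ‖Δ‖₁ ≤ 2ρ and 2ρ τ₁ (log p / n) ≤ λ/4. Then ‖Δ‖₂ ≤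 λ√h / (2κ). -/
/-!
Hölder's inequality with (iii) gives `-⟨g₀, Δ⟩ ≤ (λ/4)‖Δ‖₁`, and (iv) absorbs the curvature
term: `τ₁ (log p / n) ‖Δ‖₁² ≤ (λ/4)‖Δ‖₁`. Combined with (i) and (ii) this yields
`κ‖Δ‖₂² ≤ (λ/2)‖Δ‖₁ - λ‖Δ_{Hᶜ}‖₁ ≤ (λ/2)‖Δ_H‖₁`, and Cauchy–Schwarz on `H` bounds
`‖Δ_H‖₁ ≤ √h ‖Δ‖₂`; dividing by `‖Δ‖₂` gives the claim.
-/

open Finset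

lemma abs_sum_mul_le_of_abs_le {ι : Type*} (s : Finset ι) {g x : ι → ℝ} {c : ℝ}
    (hg : ∀ j, |g j| ≤ c) : |∑ j ∈ s, g j * x j| ≤ c * ∑ j ∈ s, |x j| := by
  rw [mul_sum]
  refine (abs_sum_le_sum_abs _ _).trans (sum_le_sum fun j _ => ?_)
  rw [abs_mul]
  exact mul_le_mul_of_nonneg_right (hg j) (abs_nonneg _)

lemma sum_abs_le_sqrt_card_mul_sqrt_sum_sq {ι : Type*} (s : Finset ι) (f : ι → ℝ) :
    ∑ j ∈ s, |f j| ≤ √(#s) * √(∑ j ∈ s, f j ^ 2) := by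
  rw [← Real.sqrt_mul (Nat.cast_nonneg _)]
  refine (le_abs_self _).trans (Real.abs_le_sqrt ?_)
  simpa only [sq_abs] using sq_sum_le_card_mul_sum_sq (s := s) (f := fun j => |f j|)

lemma mul_sq_le_mul_of_le_of_mul_le {t L R c : ℝ} (hL : 0 ≤ L) (hLR : L ≤ R)
    (hRt : R * t ≤ c) (hc : 0 ≤ c) : t * L ^ 2 ≤ c * L := by
  have htL : t * L ≤ c := by
    rcases le_total 0 t with ht | ht <;> nlinarith
  calc t * L ^ 2 = (t * L) * L := by ring
    _ ≤ c * L := mul_le_mul_of_nonneg_right htL hL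

lemma le_div_of_mul_sq_le_mul {κ b x : ℝ} (hκ : 0 < κ) (hb : 0 ≤ b) (hx : 0 ≤ x)
    (h : κ * x ^ 2 ≤ b * x) : x ≤ b / κ := by
  rcases hx.eq_or_lt with rfl | hx
  · positivity
  · rw [le_div_iff₀ hκ]
    nlinarith

lemma mul_sum_sq_le_of_rsc_of_first_order {ι : Type*} [Fintype ι] [DecidableEq ι]
    {κ t lam : ℝ} {x g₀ g₁ : ι → ℝ} {H : Finset ι} (hlam : 0 ≤ lam)
    (hrsc : κ * ∑ j, x j ^ 2 - t * (∑ j, |x j|) ^ 2 ≤ ∑ j, (g₁ j - g₀ j) * x j)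
    (hopt : ∑ j, g₁ j * x j ≤ -(lam * ∑ j ∈ Hᶜ, |x j|))
    (hg₀ : ∀ j, |g₀ j| ≤ lam / 4)
    (hcurv : t * (∑ j, |x j|) ^ 2 ≤ lam / 4 * ∑ j, |x j|) :
    κ * ∑ j, x j ^ 2 ≤ lam / 2 * ∑ j ∈ H, |x j| := by
  have hsplit := sum_add_sum_compl H fun j => |x j|
  have hg₀x := neg_le_of_abs_le (abs_sum_mul_le_of_abs_le univ (x := x) hg₀)
  have hHc : 0 ≤ lam * ∑ j ∈ Hᶜ, |x j| := mul_nonneg hlam (sum_nonneg fun _ _ => abs_nonneg _)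
  simp only [sub_mul, sum_sub_distrib] at hrsc
  linear_combination hrsc + hopt + hg₀x + hcurv + hHc / 2 - lam / 2 * hsplit

theorem l2_error_bound_h_ge_k_general
    (p n h : ℕ)
    (κ τ₁ lam ρ : ℝ) (hκ : 0 < κ) (hlam : 0 < lam)
    (Δ : Fin p → ℝ)
    (H : Finset (Fin p)) (hH : H.card = h)
    (g₀ g₁ : Fin p → ℝ)
    (hrsc : κ * (∑ j, (Δ j) ^ 2) - τ₁ * (Real.log p / n) * (∑ j, |Δ j|) ^ 2 ≤
      ∑ j, (g₁ j - g₀ j) * Δ j)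
    (hopt : ∑ j, g₁ j * Δ j ≤ -(lam * ∑ j ∈ Hᶜ, |Δ j|))
    (hg₀ : ∀ j, |g₀ j| ≤ lam / 4)
    (hΔ1 : ∑ j, |Δ j| ≤ 2 * ρ)
    (hside : 2 * ρ * τ₁ * (Real.log p / n) ≤ lam / 4) :
    Real.sqrt (∑ j, (Δ j) ^ 2) ≤ lam * Real.sqrt h / (2 * κ) := by
  have hcurv : τ₁ * (Real.log p / n) * (∑ j, |Δ j|) ^ 2 ≤ lam / 4 * ∑ j, |Δ j| :=
    mul_sq_le_mul_of_le_of_mul_le (sum_nonneg fun j _ => abs_nonneg (Δ j)) hΔ1 (by linarith)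
      (by positivity)
  have hcone := mul_sum_sq_le_of_rsc_of_first_order hlam.le hrsc hopt hg₀ hcurv
  have hH_le : ∑ j ∈ H, |Δ j| ≤ √h * √(∑ j, Δ j ^ 2) := by
    refine hH ▸ (sum_abs_le_sqrt_card_mul_sqrt_sum_sq H Δ).trans ?_
    gcongr
    exact subset_univ H
  rw [← div_div]
  refine le_div_of_mul_sq_le_mul hκ (by positivity) (Real.sqrt_nonneg _) ?_
  calc κ * √(∑ j, Δ j ^ 2) ^ 2 = κ * ∑ j, Δ j ^ 2 := by rw [Real.sq_sqrt (by positivity)]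
    _ ≤ lam / 2 * ∑ j ∈ H, |Δ j| := hcone
    _ ≤ lam / 2 * (√h * √(∑ j, Δ j ^ 2)) := by gcongr
    _ = lam * √h / 2 * √(∑ j, Δ j ^ 2) := by ring

/-- Theorem 2, ℓ2 error bound, case `h ≥ k`. Under restricted strong convexity
(i), the first-order local-optimality inequality (ii) for the unpenalized set
`H`, a bound on the gradient at the truth (iii), and side conditions (iv),
the error satisfies `‖Δ‖₂ ≤ λ√h/(2κ)`. -/
theorem l2_error_bound_h_ge_k
    (p n h : ℕ) (hp : 1 ≤ p) (hn : 1 ≤ n)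
    (κ τ₁ lam ρ : ℝ) (hκ : 0 < κ) (hτ₁ : 0 ≤ τ₁) (hlam : 0 < lam) (hρ : 0 < ρ)
    (Δ : Fin p → ℝ)
    (H : Finset (Fin p)) (hH : H.card = h)
    (g₀ g₁ : Fin p → ℝ)
    (hrsc : κ * (∑ j, (Δ j) ^ 2) - τ₁ * (Real.log p / n) * (∑ j, |Δ j|) ^ 2 ≤
      ∑ j, (g₁ j - g₀ j) * Δ j)
    (hopt : ∑ j, g₁ j * Δ j ≤ -(lam * ∑ j ∈ Hᶜ, |Δ j|))
    (hg₀ : ∀ j, |g₀ j| ≤ lam / 4)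
    (hΔ1 : ∑ j, |Δ j| ≤ 2 * ρ)
    (hside : 2 * ρ * τ₁ * (Real.log p / n) ≤ lam / 4) :
    Real.sqrt (∑ j, (Δ j) ^ 2) ≤ lam * Real.sqrt h / (2 * κ) :=
  l2_error_bound_h_ge_k_general p n h κ τ₁ lam ρ hκ hlam Δ H hH g₀ g₁ hrsc hopt hg₀ hΔ1 hside
end

section
/- (Per-iteration descent of the block coordinate descent algorithm, core of Theorem 3.) Let L : ℝ^p → ℝ be differentiable with L_f-Lipschitz gradient (L_f > 0), for each i ∈ {1,…,p} let r_i : ℝ^p → ℝ be convex, let λ > 0, τ > 0, η = 1/L_f, and let S ⊆ ℝ^p be a convex set contained in the nonnegative orthant. Let θ⁰, θ¹ ∈ ℝ^p and w⁰, w¹ ∈ S. Write r(θ) := (r_1(θ),…,r_p(θ)) ∈ ℝ^p. Assume: (a) w¹ minimizes w ↦ ½‖w − (w⁰ − τ r(θ⁰))‖₂² over S (projection step); (b) θ¹ minimizes θ ↦ (1/(2η))‖θ − (θ⁰ − η ∇L(θ⁰))‖₂² + λ Σ_{i=1}^p w¹_i r_i(θ) over ℝ^p (proximal step). Then L(θ¹)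 + λ⟨w¹, r(θ¹)⟩ + (L_f/2)‖θ¹ − θ⁰‖₂² + (λ/τ)‖w¹ − w⁰‖₂² ≤ L(θ⁰) + λ⟨w⁰, r(θ⁰)⟩. -/
/-!
Each block update minimises a squared distance plus a convex function, so its first-order
optimality condition, tested at the previous iterate, bounds the change of that block: the
projection gives `‖w¹ - w⁰‖² ≤ τ ⟨r(θ⁰), w⁰ - w¹⟩`, and the proximal step gains `L_f ‖θ¹ - θ⁰‖²`
against the linearisation of `L` at `θ⁰`. The descent lemma for `L` costs only half of that gain.
-/

open RealInnerProductSpace Filter Topology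

theorem ConvexOn.finset_sum {𝕜 E β ι : Type*} [Semiring 𝕜] [PartialOrder 𝕜]
    [AddCommMonoid E] [AddCommMonoid β] [PartialOrder β] [IsOrderedAddMonoid β]
    [SMul 𝕜 E] [Module 𝕜 β] {s : Set E} (hs : Convex 𝕜 s) (t : Finset ι)
    {f : ι → E → β} (hf : ∀ i ∈ t, ConvexOn 𝕜 s (f i)) :
    ConvexOn 𝕜 s fun x => ∑ i ∈ t, f i x := by
  classical
  induction t using Finset.induction_on with
  | empty => simpa using convexOn_const 0 hs
  | insert i t hi ih =>
    simp_rw [Finset.sum_insert hi]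
    exact (hf i (Finset.mem_insert_self i t)).add
      (ih fun j hj => hf j (Finset.mem_insert_of_mem hj))

theorem nonneg_of_forall_mul_add_sq_mul_nonneg {A B : ℝ}
    (h : ∀ t ∈ Set.Ioc (0 : ℝ) 1, 0 ≤ t * A + t ^ 2 * B) : 0 ≤ A := by
  have hlim : Tendsto (fun t : ℝ => A + t * B) (𝓝[>] 0) (𝓝 A) := by
    have hcont : Continuous fun t : ℝ => A + t * B := by fun_prop
    exact (hcont.tendsto' 0 A (by simp)).mono_left nhdsWithin_le_nhds
  refine ge_of_tendsto hlim ?_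
  filter_upwards [Ioc_mem_nhdsGT one_pos] with t ht
  exact nonneg_of_mul_nonneg_right (by linear_combination h t ht) ht.1

variable {E : Type*} [NormedAddCommGroup E] [InnerProductSpace ℝ E]

theorem norm_add_smul_sq (a b : E) (t : ℝ) :
    ‖a + t • b‖ ^ 2 = ‖a‖ ^ 2 + 2 * t * ⟪a, b⟫ + t ^ 2 * ‖b‖ ^ 2 := by
  rw [norm_add_sq_real, real_inner_smul_right, norm_smul, Real.norm_eq_abs, mul_pow, sq_abs]
  ring

theorem IsMinOn.two_mul_inner_add_sub_nonneg {K : Set E} (hK : Convex ℝ K) {h : E → ℝ}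
    (hh : ConvexOn ℝ K h) {a : ℝ} {u x y : E}
    (hmin : IsMinOn (fun z => a * ‖z - u‖ ^ 2 + h z) K x) (hx : x ∈ K) (hy : y ∈ K) :
    0 ≤ 2 * a * ⟪x - u, y - x⟫ + (h y - h x) := by
  -- compare `x` with the points `x + t • (y - x)`, `0 < t ≤ 1`, of the segment towards `y`
  refine nonneg_of_forall_mul_add_sq_mul_nonneg (B := a * ‖y - x‖ ^ 2) fun t ht => ?_
  have ht' : t ∈ Set.Icc (0 : ℝ) 1 := Set.Ioc_subset_Icc_self ht
  have hmin_t : a * ‖x - u‖ ^ 2 + h x ≤ a * ‖x + t • (y - x) - u‖ ^ 2 + h (x + t • (y - x)) :=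
    isMinOn_iff.1 hmin _ (hK.add_smul_sub_mem hx hy ht')
  have hconv : h (x + t • (y - x)) ≤ h x + t * (h y - h x) := by
    have := hh.2 hx hy (sub_nonneg.2 ht'.2) ht'.1 (sub_add_cancel 1 t)
    rw [show (1 - t) • x + t • y = x + t • (y - x) by module] at this
    simp only [smul_eq_mul] at this
    linarith
  have hexp := norm_add_smul_sq (x - u) (y - x) t
  rw [show x - u + t • (y - x) = x + t • (y - x) - u by abel] at hexp
  linear_combination hmin_t + hconv + a * hexp

theorem inner_sub_sub_smul_sub_self (a b g : E) (c : ℝ) :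
    ⟪a - (b - c • g), b - a⟫ = c * ⟪g, b - a⟫ - ‖a - b‖ ^ 2 := by
  rw [show a - (b - c • g) = -(b - a) + c • g by abel, inner_add_left, inner_neg_left,
    real_inner_smul_left, real_inner_self_eq_norm_sq, norm_sub_rev]
  ring

theorem sq_norm_sub_le_mul_inner_of_isMinOn {K : Set E} (hK : Convex ℝ K) {x y v : E} {c : ℝ}
    (hmin : IsMinOn (fun z => ‖z - (x - c • v)‖ ^ 2) K y) (hx : x ∈ K) (hy : y ∈ K) :
    ‖y - x‖ ^ 2 ≤ c * ⟪v, x - y⟫ := by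
  have hmin' : IsMinOn (fun z => 1 / 2 * ‖z - (x - c • v)‖ ^ 2 + 0) K y :=
    isMinOn_iff.2 fun z hz => by linarith [isMinOn_iff.1 hmin z hz]
  have := hmin'.two_mul_inner_add_sub_nonneg hK (convexOn_const 0 hK) hy hx
  rw [inner_sub_sub_smul_sub_self] at this
  linarith

theorem add_inv_mul_sq_norm_sub_le_of_isMinOn {h : E → ℝ} (hh : ConvexOn ℝ Set.univ h)
    {x y g : E} {η : ℝ} (hη : η ≠ 0)
    (hmin : IsMinOn (fun z => 1 / (2 * η) * ‖z - (x - η • g)‖ ^ 2 + h z) Set.univ y) :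
    h y + η⁻¹ * ‖y - x‖ ^ 2 ≤ h x - ⟪g, y - x⟫ := by
  have := hmin.two_mul_inner_add_sub_nonneg convex_univ hh trivial trivial (y := x)
  rw [inner_sub_sub_smul_sub_self, ← neg_sub y x, inner_neg_right] at this
  have hcoef : 2 * (1 / (2 * η)) = η⁻¹ := by field_simp
  rw [hcoef] at this
  linear_combination this - ⟪g, y - x⟫ * inv_mul_cancel₀ hη

variable [CompleteSpace E]

theorem LipschitzWith.inner_gradient_sub_le {f : E → ℝ} {K : NNReal}
    (hLip : LipschitzWith K (gradient f)) (x d : E) {t : ℝ} (ht : 0 ≤ t) :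
    ⟪gradient f (x + t • d) - gradient f x, d⟫ ≤ K * t * ‖d‖ ^ 2 :=
  calc ⟪gradient f (x + t • d) - gradient f x, d⟫
      ≤ ‖gradient f (x + t • d) - gradient f x‖ * ‖d‖ := real_inner_le_norm _ _
    _ ≤ K * ‖t • d‖ * ‖d‖ := by
      gcongr
      simpa using lipschitzWith_iff_norm_sub_le.1 hLip (x + t • d) x
    _ = K * t * ‖d‖ ^ 2 := by rw [norm_smul, Real.norm_of_nonneg ht]; ring

theorem Differentiable.le_add_inner_gradient_add_of_lipschitzWith {f : E → ℝ}
    (hf : Differentiable ℝ f) {K : NNReal} (hLip : LipschitzWith K (gradient f)) (x y : E) :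
    f y ≤ f x + ⟪gradient f x, y - x⟫ + K / 2 * ‖y - x‖ ^ 2 := by
  set d := y - x
  have hφ : ∀ t : ℝ, HasDerivAt (fun t : ℝ => f (x + t • d)) ⟪gradient f (x + t • d), d⟫ t := by
    intro t
    have hline : HasDerivAt (fun t : ℝ => x + t • d) d t := by
      simpa using ((hasDerivAt_id t).smul_const d).const_add x
    simpa only [Function.comp_def, InnerProductSpace.toDual_apply_apply] using
      (hf _).hasGradientAt.hasFDerivAt.comp_hasDerivAt t hline
  have hB : ∀ t : ℝ, HasDerivAt (fun t : ℝ => f x + t * ⟪gradient f x, d⟫ + K / 2 * t ^ 2 * ‖d‖ ^ 2)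
      (⟪gradient f x, d⟫ + K * t * ‖d‖ ^ 2) t := by
    intro t
    refine ((((hasDerivAt_id' t).mul_const _).const_add (f x)).fun_add
      (((hasDerivAt_pow 2 t).const_mul (K / 2 : ℝ)).mul_const _)).congr_deriv ?_
    push_cast
    ring
  have key := image_le_of_deriv_right_le_deriv_boundary
    (fun t _ => (hφ t).continuousAt.continuousWithinAt) (fun t _ => (hφ t).hasDerivWithinAt)
    (by simp) (fun t _ => (hB t).continuousAt.continuousWithinAt)
    (fun t _ => (hB t).hasDerivWithinAt) ?_ (Set.right_mem_Icc.2 zero_le_one)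
  · simpa [d] using key
  · intro t ht
    have := hLip.inner_gradient_sub_le x d ht.1
    rw [inner_sub_left] at this
    linarith

/-- Per-iteration descent of the block coordinate descent algorithm (core of
Theorem 3). One projection step in `w` followed by one proximal gradient step
in `θ` (with step size `η = 1/L_f`) decreases the objective
`F(θ, w) = L(θ) + λ ⟨w, r(θ)⟩` by at least
`(L_f/2)‖θ¹ - θ⁰‖² + (λ/τ)‖w¹ - w⁰‖²`.
Here `rθ₀` is the vector `r(θ⁰) = (r_1(θ⁰), …, r_p(θ⁰))`. -/
theorem bcd_per_iteration_descent
    (p : ℕ) (L : EuclideanSpace ℝ (Fin p) → ℝ) (hLdiff : Differentiable ℝ L)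
    (Lf : ℝ) (hLf : 0 < Lf)
    (hLip : LipschitzWith (Real.toNNReal Lf) (gradient L))
    (r : Fin p → EuclideanSpace ℝ (Fin p) → ℝ)
    (hr : ∀ i, ConvexOn ℝ Set.univ (r i))
    (lam τ η : ℝ) (hlam : 0 < lam) (hτ : 0 < τ) (hη : η = 1 / Lf)
    (S : Set (EuclideanSpace ℝ (Fin p))) (hSconv : Convex ℝ S)
    (hSnonneg : ∀ w ∈ S, ∀ i, 0 ≤ w i)
    (θ₀ θ₁ w₀ w₁ : EuclideanSpace ℝ (Fin p))
    (rθ₀ : EuclideanSpace ℝ (Fin p)) (hrθ₀ : ∀ i, rθ₀ i = r i θ₀)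
    (hw₀ : w₀ ∈ S) (hw₁ : w₁ ∈ S)
    (hproj : ∀ w ∈ S,
      ‖w₁ - (w₀ - τ • rθ₀)‖ ^ 2 / 2 ≤ ‖w - (w₀ - τ • rθ₀)‖ ^ 2 / 2)
    (hprox : ∀ θ : EuclideanSpace ℝ (Fin p),
      (1 / (2 * η)) * ‖θ₁ - (θ₀ - η • gradient L θ₀)‖ ^ 2 +
          lam * ∑ i, w₁ i * r i θ₁ ≤
        (1 / (2 * η)) * ‖θ - (θ₀ - η • gradient L θ₀)‖ ^ 2 +
          lam * ∑ i, w₁ i * r i θ) :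
    L θ₁ + lam * (∑ i, w₁ i * r i θ₁) + (Lf / 2) * ‖θ₁ - θ₀‖ ^ 2 +
        (lam / τ) * ‖w₁ - w₀‖ ^ 2 ≤
      L θ₀ + lam * (∑ i, w₀ i * r i θ₀) := by
  have hw := sq_norm_sub_le_mul_inner_of_isMinOn hSconv
    (isMinOn_iff.2 fun w hw => by linarith [hproj w hw]) hw₀ hw₁
  have hR : ConvexOn ℝ Set.univ fun θ => lam * ∑ i, w₁ i * r i θ :=
    (ConvexOn.finset_sum convex_univ _ fun i _ => (hr i).smul (hSnonneg w₁ hw₁ i)).smul hlam.le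
  have hθ := add_inv_mul_sq_norm_sub_le_of_isMinOn hR (by rw [hη]; positivity)
    (isMinOn_iff.2 fun θ _ => hprox θ)
  have hL := hLdiff.le_add_inner_gradient_add_of_lipschitzWith hLip θ₀ θ₁
  rw [hη, one_div, inv_inv] at hθ
  rw [Real.coe_toNNReal _ hLf.le] at hL
  have hrθ₀_inner : ⟪rθ₀, w₀ - w₁⟫ = ∑ i, w₀ i * r i θ₀ - ∑ i, w₁ i * r i θ₀ := by
    simp [PiLp.inner_apply, hrθ₀, ← Finset.sum_sub_distrib, sub_mul]
  have hw' : lam / τ * ‖w₁ - w₀‖ ^ 2 ≤ lam * ⟪rθ₀, w₀ - w₁⟫ :=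
    calc lam / τ * ‖w₁ - w₀‖ ^ 2 ≤ lam / τ * (τ * ⟪rθ₀, w₀ - w₁⟫) := by gcongr
      _ = lam * ⟪rθ₀, w₀ - w₁⟫ := by field_simp
  rw [hrθ₀_inner] at hw'
  linarith
end
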